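/- Let G be an unweighted complete signed graph on a finite vertex set V with |V| = n, let 𝒞 be a clustering of V and T ≥ 0. Let 𝒞' be the clustering obtained from 𝒞 by dissolving every cluster of size at most T into singleton clusters (leaving all other clusters unchanged). Then dis(𝒞',G) ≤ dis(𝒞,G) + nT/2. -/

import Mathlib

open Finset

variable {V : Type*} [Fintype V] [DecidableEq V]

/-- The set of positive neighbors of `v`. -/
def Nplus (pos : V → V → Prop) [DecidableRel pos] (v : V) : Finset V :=
  Finset.univ.filter fun u => pos v u

/-- A node `v` is `lam`-good with respect to a set `C`. -/
def IsGood (pos : V → V → Prop) [DecidableRel pos] (lam : ℝ) (v : V) (C : Finset V) : Prop :=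
  (1 - lam) * (C.card : ℝ) ≤ ((Nplus pos v ∩ C).card : ℝ) ∧
    ((Nplus pos v ∩ (Finset.univ \ C)).card : ℝ) ≤ lam * (C.card : ℝ)

/-- A set `C` is `η`-clean if every node of `C` is `η`-good with respect to `C`. -/
def IsClean (pos : V → V → Prop) [DecidableRel pos] (η : ℝ) (C : Finset V) : Prop :=
  ∀ v ∈ C, IsGood pos η v C

/-- The cluster of `v` in the clustering given by the labeling `c`. -/
def cluster (c : V → ℕ) (v : V) : Finset V :=
  Finset.univ.filter fun u => c u = c v

/-- The disagreement of the clustering given by the labeling `c` on the unweighted complete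
signed graph with positive edges `pos`: the number of negative edges inside clusters plus
the number of positive edges between different clusters. -/
noncomputable def disU (pos : V → V → Prop) [DecidableRel pos] (c : V → ℕ) : ℝ :=
  ((Finset.univ.filter fun p : V × V => p.1 ≠ p.2 ∧
      ((c p.1 = c p.2 ∧ ¬ pos p.1 p.2) ∨ (c p.1 ≠ c p.2 ∧ pos p.1 p.2))).card : ℝ) / 2

/-!
Every pair that disagrees with the new clustering but not with the old one is a positive edge
inside a dissolved cluster: pairs with both ends in surviving clusters are treated identically,
and a pair with an end in a dissolved cluster is separated in the new clustering. Ordered pairs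
inside clusters of size at most `T` number at most `n T`, and `disU` counts ordered pairs
twice.
-/

def disagreementPairs (pos : V → V → Prop) [DecidableRel pos] (c : V → ℕ) :
    Finset (V × V) :=
  univ.filter fun p : V × V => p.1 ≠ p.2 ∧
    ((c p.1 = c p.2 ∧ ¬ pos p.1 p.2) ∨ (c p.1 ≠ c p.2 ∧ pos p.1 p.2))

theorem disU_eq_card_disagreementPairs (pos : V → V → Prop) [DecidableRel pos] (c : V → ℕ) :
    disU pos c = ((disagreementPairs pos c).card : ℝ) / 2 :=
  rfl

section Labels

variable {α : Type*} [Fintype α] {c c' : α → ℕ} {u v : α}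

theorem mem_cluster : u ∈ cluster c v ↔ c u = c v := by
  simp [cluster]

theorem cluster_eq_of_label_eq (h : c u = c v) : cluster c u = cluster c v := by
  simp [cluster, h]

theorem label_eq_iff_of_cluster_eq (hv : cluster c' v = cluster c v) :
    c' u = c' v ↔ c u = c v := by
  rw [← mem_cluster, hv, mem_cluster]

theorem label_ne_of_cluster_eq_singleton (hu : cluster c u = {u}) (huv : u ≠ v) :
    c u ≠ c v := by
  intro h
  have : v ∈ cluster c u := mem_cluster.2 h.symm
  rw [hu, mem_singleton] at this
  exact huv this.symm

end Labels

noncomputable def smallClusterPairs (c : V → ℕ) (T : ℝ) : Finset (V × V) :=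
  univ.filter fun p : V × V => c p.1 = c p.2 ∧ ((cluster c p.1).card : ℝ) ≤ T

theorem card_smallClusterPairs_le (c : V → ℕ) {T : ℝ} (hT : 0 ≤ T) :
    ((smallClusterPairs c T).card : ℝ) ≤ Fintype.card V * T := by
  have hfiber : ∀ u : V,
      (((smallClusterPairs c T).filter fun p => p.1 = u).card : ℝ) ≤ T := by
    intro u
    by_cases hsmall : ((cluster c u).card : ℝ) ≤ T
    · refine le_trans ?_ hsmall
      have hinj :
          ((smallClusterPairs c T).filter fun p => p.1 = u).card ≤ (cluster c u).card := by
        refine card_le_card_of_injOn Prod.snd ?_ ?_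
        · intro p hp
          simp only [smallClusterPairs, mem_coe, mem_filter, mem_univ, true_and] at hp
          obtain ⟨⟨hc, -⟩, rfl⟩ := hp
          exact mem_cluster.2 hc.symm
        · intro p hp q hq h
          simp only [mem_coe, mem_filter] at hp hq
          exact Prod.ext (hp.2.trans hq.2.symm) h
      exact_mod_cast hinj
    · have hempty : ((smallClusterPairs c T).filter fun p => p.1 = u) = ∅ := by
        refine filter_eq_empty_iff.2 fun p hp h1 => hsmall ?_
        simp only [smallClusterPairs, mem_filter, mem_univ, true_and] at hp
        exact h1 ▸ hp.2
      simpa [hempty] using hT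
  calc ((smallClusterPairs c T).card : ℝ)
      = ∑ u : V, (((smallClusterPairs c T).filter fun p => p.1 = u).card : ℝ) := by
        rw [card_eq_sum_card_fiberwise fun p _ => mem_univ p.1]
        push_cast
        rfl
    _ ≤ ∑ _u : V, T := sum_le_sum fun u _ => hfiber u
    _ = Fintype.card V * T := by rw [sum_const, card_univ, nsmul_eq_mul]

theorem disagreementPairs_dissolve_subset (pos : V → V → Prop) [DecidableRel pos]
    {c c' : V → ℕ} {T : ℝ}
    (hsmall : ∀ v : V, ((cluster c v).card : ℝ) ≤ T → cluster c' v = {v})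
    (hbig : ∀ v : V, T < ((cluster c v).card : ℝ) → cluster c' v = cluster c v) :
    disagreementPairs pos c' ⊆ disagreementPairs pos c ∪ smallClusterPairs c T := by
  intro ⟨u, v⟩ hp
  simp only [disagreementPairs, smallClusterPairs, mem_union, mem_filter, mem_univ,
    true_and] at hp ⊢
  obtain ⟨huv, hdis⟩ := hp
  by_cases hu : ((cluster c u).card : ℝ) ≤ T
  · have hsep : c' u ≠ c' v := label_ne_of_cluster_eq_singleton (hsmall u hu) huv
    have hpos : pos u v := by tauto
    tauto
  by_cases hv : ((cluster c v).card : ℝ) ≤ T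
  · have hsep : c' u ≠ c' v := fun h =>
      label_ne_of_cluster_eq_singleton (hsmall v hv) huv.symm h.symm
    have hpos : pos u v := by tauto
    by_cases hc : c u = c v
    · rw [← cluster_eq_of_label_eq hc] at hv
      exact Or.inr ⟨hc, hv⟩
    · exact Or.inl ⟨huv, Or.inr ⟨hc, hpos⟩⟩
  · have hiff : c' u = c' v ↔ c u = c v := label_eq_iff_of_cluster_eq (hbig v (not_le.1 hv))
    left
    tauto

theorem stmt9_general {V : Type*} [Fintype V] [DecidableEq V]
    (pos : V → V → Prop) [DecidableRel pos]
    (n : ℕ) (hn : Fintype.card V = n)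
    (c : V → ℕ) (T : ℝ) (hT : 0 ≤ T)
    (c' : V → ℕ)
    (hsmall : ∀ v : V, ((cluster c v).card : ℝ) ≤ T → cluster c' v = {v})
    (hbig : ∀ v : V, T < ((cluster c v).card : ℝ) → cluster c' v = cluster c v) :
    disU pos c' ≤ disU pos c + (n : ℝ) * T / 2 := by
  have hcard : ((disagreementPairs pos c').card : ℝ)
      ≤ (disagreementPairs pos c).card + (smallClusterPairs c T).card := by
    exact_mod_cast (card_le_card (disagreementPairs_dissolve_subset pos hsmall hbig)).trans
      (card_union_le _ _)
  have hsmallPairs := card_smallClusterPairs_le c hT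
  rw [hn] at hsmallPairs
  rw [disU_eq_card_disagreementPairs, disU_eq_card_disagreementPairs]
  linarith

theorem stmt9 {V : Type*} [Fintype V] [DecidableEq V]
    (pos : V → V → Prop) [DecidableRel pos]
    (hsymm : ∀ u v, pos u v → pos v u) (hirr : ∀ v, ¬ pos v v)
    (n : ℕ) (hn : Fintype.card V = n)
    (c : V → ℕ) (T : ℝ) (hT : 0 ≤ T)
    (c' : V → ℕ)
    (hsmall : ∀ v : V, ((cluster c v).card : ℝ) ≤ T → cluster c' v = {v})
    (hbig : ∀ v : V, T < ((cluster c v).card : ℝ) → cluster c' v = cluster c v) :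
    disU pos c' ≤ disU pos c + (n : ℝ) * T / 2 :=
  stmt9_general pos n hn c T hT c' hsmall hbig
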